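/- Let σ : ℝ³ → ℝ³ satisfy σ(u)·u ≥ ρ₂|u|² + ρ_r|u|^r with ρ₂, ρ_r > 0 and monotonicity (σ(u)−σ(w))·(u−w) ≥ 0. Then ∫₀¹ σ(λu)·u dλ ≥ 2^{−2} ρ₂ |u|² + 2^{−r} ρ_r |u|^r for every u ∈ ℝ³. -/

import Mathlib

/-! Along the ray `λ ↦ λu`, monotonicity of `σ` makes `f(λ) = σ(λu)·u` nondecreasing and coercivity
makes it nonnegative for `λ > 0`. Hence `∫₀¹ f ≥ ∫_{1/2}^1 f ≥ f(1/2)/2 = σ(u/2)·(u/2)`, and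
coercivity at `u/2` gives the bound. -/

open MeasureTheory

section RayRestriction

variable {E : Type*} [NormedAddCommGroup E] [InnerProductSpace ℝ E] {σ : E → E}

theorem monotone_inner_apply_smul (hmono : ∀ u w : E, 0 ≤ (inner ℝ (σ u - σ w) (u - w) : ℝ))
    (u : E) : Monotone fun l : ℝ => (inner ℝ (σ (l • u)) u : ℝ) := by
  intro a b hab
  have h := hmono (b • u) (a • u)
  rw [← sub_smul, inner_smul_right, inner_sub_left] at h
  rcases hab.eq_or_lt with rfl | hlt
  · exact le_rfl
  · exact sub_nonneg.1 (nonneg_of_mul_nonneg_right h (sub_pos.2 hlt))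

theorem inner_apply_smul_nonneg (hσ : ∀ v : E, 0 ≤ (inner ℝ (σ v) v : ℝ)) (u : E) {l : ℝ}
    (hl : 0 < l) : 0 ≤ (inner ℝ (σ (l • u)) u : ℝ) := by
  have h := hσ (l • u)
  rw [inner_smul_right] at h
  exact nonneg_of_mul_nonneg_right h hl

end RayRestriction

theorem sub_mul_le_integral_of_monotone {f : ℝ → ℝ} (hf : Monotone f)
    (hpos : ∀ x, 0 < x → 0 ≤ f x) {a b : ℝ} (ha : 0 ≤ a) (hab : a ≤ b) :
    (b - a) * f a ≤ ∫ x in (0 : ℝ)..b, f x := by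
  have hint : ∀ c d : ℝ, IntervalIntegrable f volume c d := fun _ _ => hf.intervalIntegrable
  have hhead : 0 ≤ ∫ x in (0 : ℝ)..a, f x := by
    rw [intervalIntegral.integral_of_le ha]
    exact setIntegral_nonneg measurableSet_Ioc fun x hx => hpos x hx.1
  have htail : ∫ _ in a..b, f a ≤ ∫ x in a..b, f x :=
    intervalIntegral.integral_mono_on hab intervalIntegrable_const (hint a b)
      fun x hx => hf hx.1
  rw [intervalIntegral.integral_const, smul_eq_mul] at htail
  rw [← intervalIntegral.integral_add_adjacent_intervals (hint 0 a) (hint a b)]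
  linarith

theorem boundary_potential_lower_bound_general
    (σ : EuclideanSpace ℝ (Fin 3) → EuclideanSpace ℝ (Fin 3))
    (ρ₂ ρr r : ℝ) (hρ₂ : 0 < ρ₂) (hρr : 0 < ρr)
    (hmono : ∀ u w : EuclideanSpace ℝ (Fin 3), 0 ≤ (inner ℝ (σ u - σ w) (u - w) : ℝ))
    (hcoer : ∀ u : EuclideanSpace ℝ (Fin 3),
      ρ₂ * ‖u‖ ^ 2 + ρr * ‖u‖ ^ r ≤ (inner ℝ (σ u) u : ℝ)) :
    ∀ u : EuclideanSpace ℝ (Fin 3),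
      (2 : ℝ) ^ (-2 : ℝ) * ρ₂ * ‖u‖ ^ 2 + (2 : ℝ) ^ (-r) * ρr * ‖u‖ ^ r
        ≤ ∫ l in (0 : ℝ)..1, (inner ℝ (σ (l • u)) u : ℝ) := by
  intro u
  have hσ_nonneg : ∀ v, 0 ≤ (inner ℝ (σ v) v : ℝ) := fun v =>
    le_trans (by positivity) (hcoer v)
  have hhalf : ‖(1 / 2 : ℝ) • u‖ = 2⁻¹ * ‖u‖ := by rw [norm_smul]; norm_num
  calc (2 : ℝ) ^ (-2 : ℝ) * ρ₂ * ‖u‖ ^ 2 + (2 : ℝ) ^ (-r) * ρr * ‖u‖ ^ r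
      = ρ₂ * ‖(1 / 2 : ℝ) • u‖ ^ 2 + ρr * ‖(1 / 2 : ℝ) • u‖ ^ r := by
        rw [hhalf, Real.mul_rpow (by norm_num) (norm_nonneg u), Real.inv_rpow (by norm_num),
          Real.rpow_neg (by norm_num), Real.rpow_neg (by norm_num), Real.rpow_two]
        ring
    _ ≤ inner ℝ (σ ((1 / 2 : ℝ) • u)) ((1 / 2 : ℝ) • u) := hcoer _
    _ = (1 - 1 / 2) * inner ℝ (σ ((1 / 2 : ℝ) • u)) u := by rw [inner_smul_right]; ring
    _ ≤ ∫ l in (0 : ℝ)..1, (inner ℝ (σ (l • u)) u : ℝ) :=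
        sub_mul_le_integral_of_monotone (monotone_inner_apply_smul hmono u)
          (fun _ hl => inner_apply_smul_nonneg hσ_nonneg u hl) (by norm_num) (by norm_num)

/-- Lower bound for the boundary dissipation potential: if `σ : ℝ³ → ℝ³` is continuous,
monotone and coercive (`σ(u)·u ≥ ρ₂|u|² + ρ_r|u|^r`), then
`∫₀¹ σ(λu)·u dλ ≥ 2⁻²ρ₂|u|² + 2⁻ʳρ_r|u|^r` for every `u ∈ ℝ³`. -/
theorem boundary_potential_lower_bound
    (σ : EuclideanSpace ℝ (Fin 3) → EuclideanSpace ℝ (Fin 3))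
    (ρ₂ ρr r : ℝ) (hρ₂ : 0 < ρ₂) (hρr : 0 < ρr) (hr : 1 < r)
    (hσ : Continuous σ)
    (hmono : ∀ u w : EuclideanSpace ℝ (Fin 3), 0 ≤ (inner ℝ (σ u - σ w) (u - w) : ℝ))
    (hcoer : ∀ u : EuclideanSpace ℝ (Fin 3),
      ρ₂ * ‖u‖ ^ 2 + ρr * ‖u‖ ^ r ≤ (inner ℝ (σ u) u : ℝ)) :
    ∀ u : EuclideanSpace ℝ (Fin 3),
      (2 : ℝ) ^ (-2 : ℝ) * ρ₂ * ‖u‖ ^ 2 + (2 : ℝ) ^ (-r) * ρr * ‖u‖ ^ r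
        ≤ ∫ l in (0 : ℝ)..1, (inner ℝ (σ (l • u)) u : ℝ) :=
  boundary_potential_lower_bound_general σ ρ₂ ρr r hρ₂ hρr hmono hcoer
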